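/- arXiv:1804.05430 — 2 statements merged into one kernel-verified Lean document; each statement's English description precedes it below -/
import Mathlib

section
/- Suppose that for each region i there exist indices j₁, j₂ with Y_{ij₁} = 0 and Y_{ij₂} = 1. Given any current iterates (α⁽ᵗ⁾, β⁽ᵗ⁾, γ⁽ᵗ⁾), define updated iterates as follows: α⁽ᵗ⁺¹⁾ is a global minimizer of α ↦ φ(α, β⁽ᵗ⁾, γ⁽ᵗ⁾) (assumed to exist); letting l(β) denote the map β ↦ −loglik(α⁽ᵗ⁺¹⁾, β, γ⁽ᵗ⁾) and β̃ a global minimizer (assumed to exist) of the surrogate β ↦ l̃(β; β⁽ᵗ⁾) + P_{λ₁}(β), where l̃(·; β⁽ᵗ⁾) is the second-order Taylor expansion of l at β⁽ᵗ⁾, set β⁽ᵗ⁺¹⁾ = β̃ if φ(α⁽ᵗ⁺¹⁾, β̃, γ⁽ᵗ⁾) ≤ φ(α⁽ᵗ⁺¹⁾, β⁽ᵗ⁾, γ⁽ᵗ⁾), and otherwise β⁽ᵗ⁺¹⁾ = h̃β̃ + (1−h̃)β⁽ᵗ⁾ where h̃ minimizes h ↦ φ(α⁽ᵗ⁺¹⁾,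 hβ̃ + (1−h)β⁽ᵗ⁾, γ⁽ᵗ⁾) over [0,1] (assumed to exist); and for each i, γᵢ⁽ᵗ⁺¹⁾ is a global minimizer (assumed to exist) of γ ↦ Σ_{j=1}^{nᵢ} [log(1 + exp(γ + νᵢⱼ)) − Y_{ij}(γ + νᵢⱼ)] + nᵢ q_{λ₂}(γ), with νᵢⱼ = Q_{ij}ᵀα⁽ᵗ⁺¹⁾ + βᵢ⁽ᵗ⁺¹⁾. Then the monotone decreasing property holds: φ(α⁽ᵗ⁾, β⁽ᵗ⁾, γ⁽ᵗ⁾) ≥ φ(α⁽ᵗ⁺¹⁾, β⁽ᵗ⁾, γ⁽ᵗ⁾) ≥ φ(α⁽ᵗ⁺¹⁾, β⁽ᵗ⁺¹⁾, γ⁽ᵗ⁾) ≥ φ(α⁽ᵗ⁺¹⁾, β⁽ᵗ⁺¹⁾, γ⁽ᵗ⁺¹⁾). -/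
open Finset

/-- The hard thresholding penalty: `q_λ(t) = λ|t| − t²/2` if `|t| < λ`, and `λ²/2`
otherwise. -/
noncomputable def qhard (lam t : ℝ) : ℝ :=
  if |t| < lam then lam * |t| - t ^ 2 / 2 else lam ^ 2 / 2

/-- Second-order Taylor expansion of `l` at `t0`, evaluated at `t`:
`l̃(t; t⁰) = l(t⁰) + ⟨∇l(t⁰), t − t⁰⟩ + (1/2)⟨t − t⁰, ∇²l(t⁰)(t − t⁰)⟩`. -/
noncomputable def taylor2 {n : ℕ} (l : (Fin n → ℝ) → ℝ) (t0 t : Fin n → ℝ) : ℝ :=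
  l t0 + fderiv ℝ l t0 (t - t0)
    + (1 / 2) * fderiv ℝ (fun x => fderiv ℝ l x) t0 (t - t0) (t - t0)

/-- Proposition 3.1: monotone decreasing property of the alternating
minimization algorithm for `φ(α, β, γ) = −loglik(α, β, γ) + P_{λ₁}(β) + Q_{λ₂}(γ)`,
assuming each region contains at least one subject with `Y = 0` and one with `Y = 1`.
The updates are: `α'` globally minimizes `φ(·, β, γ)`; `β'` is the one-step modification
of a global minimizer `β̃` of the surrogate in which the loss is replaced by its
second-order Taylor expansion at `β`; and `γ'ᵢ` globally minimizes the per-region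
univariate penalized loss. Then
`φ(α, β, γ) ≥ φ(α', β, γ) ≥ φ(α', β', γ) ≥ φ(α', β', γ')`. -/
theorem stmt0 (K p : ℕ) (n : Fin K → ℕ) (hn : ∀ i, 1 ≤ n i)
    (Y : (i : Fin K) → Fin (n i) → ℝ) (hY : ∀ i j, Y i j = 0 ∨ Y i j = 1)
    (hY01 : ∀ i, (∃ j, Y i j = 0) ∧ (∃ j, Y i j = 1))
    (Q : (i : Fin K) → Fin (n i) → Fin p → ℝ)
    (lam1 lam2 : ℝ) (hlam1 : 0 ≤ lam1) (hlam2 : 0 < lam2)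
    (ρ : Fin K → Fin K → ℝ) (hρ : ∀ i1 i2, 0 ≤ ρ i1 i2)
    (N : ℝ) (hN : N = ∑ i, (n i : ℝ))
    -- the normalized negative log-likelihood
    (negloglik : (Fin p → ℝ) → (Fin K → ℝ) → (Fin K → ℝ) → ℝ)
    (hnll : ∀ α β γ, negloglik α β γ =
      (1 / N) * ∑ i, ∑ j,
        (Real.log (1 + Real.exp ((∑ k, Q i j k * α k) + β i + γ i))
          - Y i j * ((∑ k, Q i j k * α k) + β i + γ i)))
    -- the fusion penalty
    (P : (Fin K → ℝ) → ℝ)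
    (hP : ∀ β, P β = lam1 * ∑ q ∈ Finset.univ.filter (fun q : Fin K × Fin K => q.1 < q.2),
        ρ q.1 q.2 * |β q.1 - β q.2|)
    -- the sparse penalty
    (Qpen : (Fin K → ℝ) → ℝ)
    (hQpen : ∀ γ, Qpen γ = (1 / N) * ∑ i, (n i : ℝ) * qhard lam2 (γ i))
    -- the objective function
    (φ : (Fin p → ℝ) → (Fin K → ℝ) → (Fin K → ℝ) → ℝ)
    (hφ : ∀ α β γ, φ α β γ = negloglik α β γ + P β + Qpen γ)
    -- current iterates
    (α : Fin p → ℝ) (β γ : Fin K → ℝ)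
    -- α-step: α' is a global minimizer of φ(·, β, γ)
    (α' : Fin p → ℝ) (hα' : ∀ a, φ α' β γ ≤ φ a β γ)
    -- β-step: β̃ is a global minimizer of the surrogate objective
    (βtil : Fin K → ℝ)
    (hβtil : ∀ betab,
        taylor2 (fun x => negloglik α' x γ) β βtil + P βtil
          ≤ taylor2 (fun x => negloglik α' x γ) β betab + P betab)
    -- one-step modification: h̃ minimizes h ↦ φ(α', hβ̃ + (1−h)β, γ) over [0,1]
    (htil : ℝ) (hhtil : htil ∈ Set.Icc (0 : ℝ) 1)
    (hhmin : ∀ h ∈ Set.Icc (0 : ℝ) 1,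
        φ α' (htil • βtil + (1 - htil) • β) γ ≤ φ α' (h • βtil + (1 - h) • β) γ)
    (β' : Fin K → ℝ)
    (hβ' : β' = if φ α' βtil γ ≤ φ α' β γ then βtil else htil • βtil + (1 - htil) • β)
    -- γ-step: for each region i, γ'ᵢ minimizes the univariate penalized loss
    (γ' : Fin K → ℝ)
    (hγ' : ∀ i (g : ℝ),
        (∑ j, (Real.log (1 + Real.exp (γ' i + ((∑ k, Q i j k * α' k) + β' i)))
            - Y i j * (γ' i + ((∑ k, Q i j k * α' k) + β' i))))
          + (n i : ℝ) * qhard lam2 (γ' i)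
        ≤ (∑ j, (Real.log (1 + Real.exp (g + ((∑ k, Q i j k * α' k) + β' i)))
            - Y i j * (g + ((∑ k, Q i j k * α' k) + β' i))))
          + (n i : ℝ) * qhard lam2 g) :
    φ α β γ ≥ φ α' β γ ∧ φ α' β γ ≥ φ α' β' γ ∧ φ α' β' γ ≥ φ α' β' γ' := by

  have hNnn : (0:ℝ) ≤ 1 / N := by
    rw [hN]
    apply one_div_nonneg.mpr
    exact Finset.sum_nonneg fun i _ => by positivity
  -- first inequality
  have h1 : φ α β γ ≥ φ α' β γ := hα' α
  -- second inequality
  have h2 : φ α' β γ ≥ φ α' β' γ := by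
    rw [hβ']
    by_cases hc : φ α' βtil γ ≤ φ α' β γ
    · simpa [hc] using hc
    · simp only [hc, if_false]
      have := hhmin 0 (by constructor <;> norm_num)
      simpa using this
  -- third inequality
  have e : ∀ (g : Fin K → ℝ), negloglik α' β' g + Qpen g
      = (1 / N) * ∑ i, ((∑ j, (Real.log (1 + Real.exp (g i + ((∑ k, Q i j k * α' k) + β' i)))
          - Y i j * (g i + ((∑ k, Q i j k * α' k) + β' i)))) + (n i : ℝ) * qhard lam2 (g i)) := by
    intro g
    rw [hnll, hQpen, ← mul_add, ← Finset.sum_add_distrib]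
    congr 1
    refine Finset.sum_congr rfl fun i _ => ?_
    congr 1
    refine Finset.sum_congr rfl fun j _ => ?_
    ring_nf
  have h3 : φ α' β' γ ≥ φ α' β' γ' := by
    rw [hφ, hφ]
    have hsum : (1 / N) * ∑ i, ((∑ j, (Real.log (1 + Real.exp (γ' i + ((∑ k, Q i j k * α' k) + β' i)))
          - Y i j * (γ' i + ((∑ k, Q i j k * α' k) + β' i)))) + (n i : ℝ) * qhard lam2 (γ' i))
        ≤ (1 / N) * ∑ i, ((∑ j, (Real.log (1 + Real.exp (γ i + ((∑ k, Q i j k * α' k) + β' i)))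
          - Y i j * (γ i + ((∑ k, Q i j k * α' k) + β' i)))) + (n i : ℝ) * qhard lam2 (γ i)) := by
      apply mul_le_mul_of_nonneg_left _ hNnn
      exact Finset.sum_le_sum fun i _ => hγ' i (γ i)
    have e1 := e γ
    have e2 := e γ'
    linarith
  exact ⟨h1, h2, h3⟩
end

section
/- Let λ > 0 and let l : ℝ → ℝ be a convex continuous function that attains a global minimum at some point t̃ ∈ ℝ. Then the function l + q_λ attains its infimum over ℝ, and there exists a global minimizer of l + q_λ that lies in the set [−λ, λ] ∪ {t̃}. -/
lemma qhard_le (lam t : ℝ) : qhard lam t ≤ lam ^ 2 / 2 := by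
  unfold qhard
  split_ifs with h
  · nlinarith [sq_abs t, abs_nonneg t]
  · exact le_refl _

lemma qhard_eq (lam t : ℝ) (h : |t| ≤ lam) : qhard lam t = lam * |t| - t ^ 2 / 2 := by
  unfold qhard
  split_ifs with h'
  · rfl
  · have : |t| = lam := le_antisymm h (not_lt.mp h')
    rw [← this]
    nlinarith [sq_abs t]

/-- if `λ > 0` and `l : ℝ → ℝ` is convex, continuous, and attains a global
minimum at some `t̃`, then `l + q_λ` attains its infimum over `ℝ`, and some global
minimizer of `l + q_λ` lies in `[−λ, λ] ∪ {t̃}`. -/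
theorem stmt13 (lam : ℝ) (hlam : 0 < lam) (l : ℝ → ℝ)
    (hconv : ConvexOn ℝ Set.univ l) (hcont : Continuous l)
    (ttil : ℝ) (httil : ∀ s, l ttil ≤ l s) :
    ∃ t ∈ Set.Icc (-lam) lam ∪ {ttil}, ∀ s, l t + qhard lam t ≤ l s + qhard lam s := by
  set g : ℝ → ℝ := fun t => l t + (lam * |t| - t ^ 2 / 2) with hg
  have hgc : Continuous g := by
    apply hcont.add
    exact (continuous_const.mul continuous_abs).sub
      ((continuous_pow 2).div_const 2)
  obtain ⟨t₀, ht₀mem, ht₀min⟩ := isCompact_Icc.exists_isMinOn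
    (Set.nonempty_Icc.mpr (by linarith)) (hgc.continuousOn (s := Set.Icc (-lam) lam))
  have habs : ∀ s ∈ Set.Icc (-lam) lam, |s| ≤ lam := fun s hs => abs_le.mpr ⟨hs.1, hs.2⟩
  have hq0 : qhard lam t₀ = lam * |t₀| - t₀ ^ 2 / 2 := qhard_eq lam t₀ (habs _ ht₀mem)
  -- comparison with t̃ via f(t̃) ≤ l(s) + λ²/2
  have hkey : ∀ s, lam < |s| → l ttil + qhard lam ttil ≤ l s + qhard lam s := by
    intro s hs
    have : qhard lam s = lam ^ 2 / 2 := by unfold qhard; rw [if_neg (not_lt.mpr hs.le)]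
    rw [this]
    have h1 := qhard_le lam ttil
    have h2 := httil s
    linarith
  by_cases hcase : l t₀ + qhard lam t₀ ≤ l ttil + qhard lam ttil
  · refine ⟨t₀, Or.inl ht₀mem, fun s => ?_⟩
    by_cases hs : |s| ≤ lam
    · have := ht₀min (abs_le.mp hs : s ∈ Set.Icc (-lam) lam)
      rw [hq0, qhard_eq lam s hs]
      simpa [hg] using this
    · exact hcase.trans (hkey s (not_le.mp hs))
  · refine ⟨ttil, Or.inr rfl, fun s => ?_⟩
    push_neg at hcase
    by_cases hs : |s| ≤ lam
    · have := ht₀min (abs_le.mp hs : s ∈ Set.Icc (-lam) lam)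
      have h2 : l t₀ + qhard lam t₀ ≤ l s + qhard lam s := by
        rw [hq0, qhard_eq lam s hs]; simpa [hg] using this
      linarith
    · exact hkey s (not_le.mp hs)
end
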